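/- arXiv:1703.06316 — 5 statements merged into one kernel-verified Lean document; each statement's English description precedes it below -/
import Mathlib

section
/- Let 1 ≤ p < 2 and n = dk for natural numbers d, k ≥ 1. Then there exist norm-one linear functionals ψ₁,…,ψₙ on ℓ_p^d (namely k copies of each coordinate functional) whose product has supremum norm exactly d^{-n/p}; consequently the n-th linear polarization constant satisfies c_n(ℓ_p^d) ≥ d^{n/p}. -/
open scoped ENNReal

/-- The supremum norm over the unit ball of the pointwise product of finitely many
continuous linear functionals. -/
noncomputable def prodSupNorm {𝕜 X : Type*} [RCLike 𝕜] [NormedAddCommGroup X]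
    [NormedSpace 𝕜 X] {n : ℕ} (ψ : Fin n → (X →L[𝕜] 𝕜)) : ℝ :=
  sSup {r : ℝ | ∃ x : X, ‖x‖ ≤ 1 ∧ r = ‖∏ j, ψ j x‖}

/-- The n-th linear polarization constant of a normed space `X`: the least constant `c ≥ 0`
such that `‖ψ₁‖⋯‖ψₙ‖ ≤ c·‖ψ₁⋯ψₙ‖` for all continuous linear functionals `ψ₁,…,ψₙ`. -/
noncomputable def polarizationConstant (𝕜 : Type*) (X : Type*) [RCLike 𝕜]
    [NormedAddCommGroup X] [NormedSpace 𝕜 X] (n : ℕ) : ℝ :=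
  sInf {c : ℝ | 0 ≤ c ∧ ∀ ψ : Fin n → (X →L[𝕜] 𝕜), (∏ j, ‖ψ j‖) ≤ c * prodSupNorm ψ}

/-!
AM-GM applied to `‖x v‖ ^ p` shows that on the unit ball of `ℓ_p^d` the product `∏ ‖x v‖` is at
most `d^(-d/p)`, with equality at the constant vector `d^(-1/p)`; taking every coordinate
functional `k` times therefore gives a product of sup norm `d^(-n/p)`.

Since `sInf ∅ = 0`, the lower bound on the polarization constant needs some admissible constant.
In finite dimensions the sup norm of the product is lower semicontinuous and, as a vector space
over an infinite field is not a finite union of kernels, positive on the compact set of tuples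
of unit functionals. It is thus bounded below there by some `ε > 0`, and after normalizing the
functionals `ε⁻¹` is admissible.
-/

open Set Metric

theorem Module.exists_forall_apply_ne_zero {K V ι : Type*} [DivisionRing K] [Infinite K]
    [AddCommGroup V] [Module K V] [Finite ι] (f : ι → V →ₗ[K] K) (hf : ∀ i, f i ≠ 0) :
    ∃ x, ∀ i, f i x ≠ 0 := by
  by_contra! h
  obtain ⟨i, hi⟩ := Subspace.exists_eq_top_of_iUnion_eq_univ (p := fun i => LinearMap.ker (f i))
    (eq_univ_of_forall fun x => mem_iUnion.2 (h x))
  exact hf i (LinearMap.ker_eq_top.1 hi)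

section prodSupNorm

variable {𝕜 X : Type*} [RCLike 𝕜] [NormedAddCommGroup X] [NormedSpace 𝕜 X] {n : ℕ}

theorem prodSupNorm_eq_iSup (ψ : Fin n → (X →L[𝕜] 𝕜)) :
    prodSupNorm ψ = ⨆ x : closedBall (0 : X) 1, ‖∏ j, ψ j x‖ := by
  rw [prodSupNorm, iSup]
  congr 1
  ext r
  simp [eq_comm]

theorem bddAbove_range_norm_prod_apply (ψ : Fin n → (X →L[𝕜] 𝕜)) :
    BddAbove (range fun x : closedBall (0 : X) 1 => ‖∏ j, ψ j x‖) := by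
  refine ⟨∏ j, ‖ψ j‖, ?_⟩
  rintro _ ⟨⟨x, hx⟩, rfl⟩
  rw [mem_closedBall_zero_iff] at hx
  show ‖∏ j, ψ j x‖ ≤ _
  rw [norm_prod]
  gcongr with j
  exact (ψ j).le_of_opNorm_le_of_le le_rfl hx |>.trans_eq (mul_one _)

theorem le_prodSupNorm (ψ : Fin n → (X →L[𝕜] 𝕜)) {x : X} (hx : ‖x‖ ≤ 1) :
    ‖∏ j, ψ j x‖ ≤ prodSupNorm ψ := by
  rw [prodSupNorm_eq_iSup]
  exact le_ciSup_of_le (bddAbove_range_norm_prod_apply ψ) ⟨x, mem_closedBall_zero_iff.2 hx⟩ le_rfl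

theorem prodSupNorm_nonneg (ψ : Fin n → (X →L[𝕜] 𝕜)) : 0 ≤ prodSupNorm ψ :=
  (norm_nonneg _).trans (le_prodSupNorm ψ (x := 0) (by simp))

theorem prodSupNorm_le (ψ : Fin n → (X →L[𝕜] 𝕜)) {M : ℝ}
    (h : ∀ x : X, ‖x‖ ≤ 1 → ‖∏ j, ψ j x‖ ≤ M) : prodSupNorm ψ ≤ M := by
  rw [prodSupNorm_eq_iSup]
  have : Nonempty (closedBall (0 : X) 1) := ⟨⟨0, mem_closedBall_self zero_le_one⟩⟩
  exact ciSup_le fun x => h x (mem_closedBall_zero_iff.1 x.2)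

theorem prodSupNorm_smul_le (c : Fin n → 𝕜) (ψ : Fin n → (X →L[𝕜] 𝕜)) :
    prodSupNorm (fun j => c j • ψ j) ≤ (∏ j, ‖c j‖) * prodSupNorm ψ := by
  refine prodSupNorm_le _ fun x hx => ?_
  simp only [smul_apply, smul_eq_mul, Finset.prod_mul_distrib, norm_mul, norm_prod]
  gcongr
  simpa only [norm_prod] using le_prodSupNorm ψ hx

theorem prodSupNorm_pos {ψ : Fin n → (X →L[𝕜] 𝕜)} (hψ : ∀ j, ψ j ≠ 0) : 0 < prodSupNorm ψ := by
  obtain ⟨x, hx⟩ := Module.exists_forall_apply_ne_zero (fun j => (ψ j : X →ₗ[𝕜] 𝕜))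
    fun j h => hψ j (ContinuousLinearMap.coe_injective h)
  set t : 𝕜 := (((‖x‖ + 1)⁻¹ : ℝ) : 𝕜)
  have ht : t ≠ 0 := by simp only [t, ne_eq, RCLike.ofReal_eq_zero]; positivity
  have htx : ‖t • x‖ ≤ 1 := by
    rw [norm_smul, RCLike.norm_ofReal, abs_of_pos (by positivity), inv_mul_le_iff₀ (by positivity)]
    linarith
  refine lt_of_lt_of_le (norm_pos_iff.2 ?_) (le_prodSupNorm ψ htx)
  exact Finset.prod_ne_zero_iff.2 fun j _ => by simpa [ht] using hx j

theorem lowerSemicontinuous_prodSupNorm :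
    LowerSemicontinuous (prodSupNorm : (Fin n → (X →L[𝕜] 𝕜)) → ℝ) := by
  simp_rw [funext prodSupNorm_eq_iSup]
  refine lowerSemicontinuous_ciSup bddAbove_range_norm_prod_apply fun x => ?_
  exact Continuous.lowerSemicontinuous <| by fun_prop

end prodSupNorm

section polarizationConstant

variable {𝕜 X : Type*} [RCLike 𝕜] [NormedAddCommGroup X] [NormedSpace 𝕜 X]
  [FiniteDimensional 𝕜 X]

theorem exists_pos_le_prodSupNorm_of_norm_eq_one (n : ℕ) :
    ∃ ε > 0, ∀ ψ : Fin n → (X →L[𝕜] 𝕜), (∀ j, ‖ψ j‖ = 1) → ε ≤ prodSupNorm ψ := by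
  have : ProperSpace (X →L[𝕜] 𝕜) := FiniteDimensional.proper 𝕜 _
  set K : Set (Fin n → (X →L[𝕜] 𝕜)) := univ.pi fun _ => sphere 0 1
  have hK : ∀ ψ, ψ ∈ K ↔ ∀ j, ‖ψ j‖ = 1 := by simp [K]
  rcases K.eq_empty_or_nonempty with hK₀ | hK₀
  · refine ⟨1, one_pos, fun ψ hψ => ?_⟩
    simpa [hK₀] using (hK ψ).2 hψ
  obtain ⟨ψ₀, hψ₀, hmin⟩ := (lowerSemicontinuous_prodSupNorm.lowerSemicontinuousOn K).exists_isMinOn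
    hK₀ (isCompact_univ_pi fun _ => isCompact_sphere 0 1)
  refine ⟨prodSupNorm ψ₀, prodSupNorm_pos fun j h => ?_, fun ψ hψ => hmin ((hK ψ).2 hψ)⟩
  simpa [h] using (hK ψ₀).1 hψ₀ j

theorem exists_prod_norm_le_mul_prodSupNorm (n : ℕ) :
    ∃ c, 0 ≤ c ∧ ∀ ψ : Fin n → (X →L[𝕜] 𝕜), ∏ j, ‖ψ j‖ ≤ c * prodSupNorm ψ := by
  obtain ⟨ε, hε, hK⟩ := exists_pos_le_prodSupNorm_of_norm_eq_one (𝕜 := 𝕜) (X := X) n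
  refine ⟨ε⁻¹, inv_nonneg.2 hε.le, fun ψ => ?_⟩
  rcases em (∃ j, ψ j = 0) with ⟨j, hj⟩ | hψ
  · rw [Finset.prod_eq_zero (Finset.mem_univ j) (by simp [hj])]
    exact mul_nonneg (inv_nonneg.2 hε.le) (prodSupNorm_nonneg ψ)
  have hnorm : ∀ j, 0 < ‖ψ j‖ := fun j => norm_pos_iff.2 fun h => hψ ⟨j, h⟩
  have hnormalized := (hK _ fun j => ?_).trans
    (prodSupNorm_smul_le (fun j => ((‖ψ j‖⁻¹ : ℝ) : 𝕜)) ψ)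
  · simp only [norm_algebraMap', norm_inv, norm_norm] at hnormalized
    rw [Finset.prod_inv_distrib, le_inv_mul_iff₀ (Finset.prod_pos fun j _ => hnorm j)]
      at hnormalized
    rwa [le_inv_mul_iff₀ hε, mul_comm]
  · rw [norm_smul, RCLike.norm_ofReal, abs_inv, abs_norm, inv_mul_cancel₀ (hnorm j).ne']

theorem div_prodSupNorm_le_polarizationConstant {n : ℕ} (ψ : Fin n → (X →L[𝕜] 𝕜)) :
    (∏ j, ‖ψ j‖) / prodSupNorm ψ ≤ polarizationConstant 𝕜 X n := by
  refine le_csInf (exists_prod_norm_le_mul_prodSupNorm n) fun c ⟨hc, hψ⟩ => ?_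
  exact div_le_of_le_mul₀ (prodSupNorm_nonneg ψ) hc (hψ ψ)

end polarizationConstant

theorem Real.prod_le_sum_rpow_div_card_rpow {ι : Type*} [Fintype ι] [Nonempty ι] {q : ℝ}
    (hq : 0 < q) {z : ι → ℝ} (hz : ∀ i, 0 ≤ z i) :
    ∏ i, z i ≤ ((∑ i, z i ^ q) / Fintype.card ι) ^ ((Fintype.card ι : ℝ) / q) := by
  set N : ℝ := (Fintype.card ι : ℝ)
  have hN : 0 < N := Nat.cast_pos.2 Fintype.card_pos
  have hP : 0 ≤ ∏ i, z i := Finset.prod_nonneg fun i _ => hz i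
  have amgm := Real.geom_mean_le_arith_mean_weighted Finset.univ (fun _ => N⁻¹) (fun i => z i ^ q)
    (fun _ _ => by positivity) (by simp [N, Finset.card_univ]) fun i _ => by positivity [hz i]
  have hgeom : ∏ i, (z i ^ q) ^ N⁻¹ = (∏ i, z i) ^ (q / N) := by
    rw [← Real.finsetProd_rpow _ _ fun i _ => hz i]
    exact Finset.prod_congr rfl fun i _ => by rw [← Real.rpow_mul (hz i), div_eq_mul_inv]
  rw [hgeom, ← Finset.mul_sum, inv_mul_eq_div] at amgm
  calc ∏ i, z i = ((∏ i, z i) ^ (q / N)) ^ (N / q) := by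
        rw [← Real.rpow_mul hP, div_mul_div_cancel₀ hN.ne', div_self hq.ne', Real.rpow_one]
    _ ≤ _ := by gcongr

theorem PiLp.sum_norm_apply_rpow {p : ℝ≥0∞} {ι : Type*} [Fintype ι] {β : ι → Type*}
    [∀ i, SeminormedAddCommGroup (β i)] (hp : 0 < p.toReal) (x : PiLp p β) :
    ∑ i, ‖x i‖ ^ p.toReal = ‖x‖ ^ p.toReal := by
  rw [PiLp.norm_eq_sum hp, ← Real.rpow_mul (by positivity), one_div_mul_cancel hp.ne',
    Real.rpow_one]

theorem PiLp.prod_norm_apply_le {p : ℝ≥0∞} [Fact (1 ≤ p)] (hp : p ≠ ∞) {ι : Type*} [Fintype ι]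
    [Nonempty ι] {β : ι → Type*} [∀ i, SeminormedAddCommGroup (β i)] (x : PiLp p β) :
    ∏ i, ‖x i‖ ≤
      (Fintype.card ι : ℝ) ^ (-(Fintype.card ι : ℝ) / p.toReal) * ‖x‖ ^ Fintype.card ι := by
  have hp₀ : 0 < p.toReal := ENNReal.toReal_pos (zero_lt_one.trans_le Fact.out).ne' hp
  set N : ℝ := (Fintype.card ι : ℝ)
  have hN : 0 < N := Nat.cast_pos.2 Fintype.card_pos
  calc ∏ i, ‖x i‖ ≤ ((∑ i, ‖x i‖ ^ p.toReal) / N) ^ (N / p.toReal) :=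
        Real.prod_le_sum_rpow_div_card_rpow hp₀ fun i => norm_nonneg _
    _ = N ^ (-N / p.toReal) * ‖x‖ ^ Fintype.card ι := by
        rw [PiLp.sum_norm_apply_rpow hp₀, Real.div_rpow (by positivity) hN.le,
          ← Real.rpow_mul (norm_nonneg _), mul_div_cancel₀ _ hp₀.ne', Real.rpow_natCast, neg_div,
          Real.rpow_neg hN.le, div_eq_inv_mul]

theorem PiLp.norm_proj_eq_one (p : ℝ≥0∞) [Fact (1 ≤ p)] {𝕜 ι : Type*} [RCLike 𝕜] [Fintype ι]
    (i : ι) : ‖(PiLp.proj p (fun _ : ι => 𝕜) i : PiLp p (fun _ : ι => 𝕜) →L[𝕜] 𝕜)‖ = 1 := by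
  classical
  refine le_antisymm (ContinuousLinearMap.opNorm_le_bound _ zero_le_one fun x => ?_) ?_
  · simpa using PiLp.norm_apply_le x i
  · simpa using (PiLp.proj p (fun _ : ι => 𝕜) i : PiLp p (fun _ : ι => 𝕜) →L[𝕜] 𝕜).le_opNorm
      (PiLp.single p i 1)

theorem Fin.prod_comp_divNat {M : Type*} [CommMonoid M] {d k : ℕ} (f : Fin d → M) :
    ∏ j : Fin (d * k), f j.divNat = ∏ v, f v ^ k := by
  have hdiv (a : Fin d × Fin k) : (finProdFinEquiv a).divNat = a.1 :=
    congrArg Prod.fst (finProdFinEquiv.symm_apply_apply a)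
  rw [← finProdFinEquiv.prod_comp, Fintype.prod_prod_type]
  simp only [hdiv, Finset.prod_const, Finset.card_univ, Fintype.card_fin]

theorem PiLp.exists_norm_eq_one_prod_norm_apply_eq {𝕜 ι : Type*} [RCLike 𝕜] (p : ℝ≥0∞)
    [Fact (1 ≤ p)] (hp : p ≠ ∞) [Fintype ι] [Nonempty ι] :
    ∃ x : PiLp p (fun _ : ι => 𝕜), ‖x‖ = 1 ∧
      ∏ i, ‖x i‖ = (Fintype.card ι : ℝ) ^ (-(Fintype.card ι : ℝ) / p.toReal) := by
  set N : ℝ := (Fintype.card ι : ℝ)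
  have hN : 0 < N := Nat.cast_pos.2 Fintype.card_pos
  set c : ℝ := N ^ (-1 / p.toReal)
  have hc : 0 < c := by positivity
  refine ⟨WithLp.toLp p (Function.const ι (c : 𝕜)), ?_, ?_⟩
  · rw [PiLp.norm_toLp_const hp]
    simp only [NNReal.coe_natCast, one_div, ENNReal.toReal_inv, RCLike.norm_ofReal, abs_of_pos hc,
      c, N]
    rw [← Real.rpow_add hN, neg_div, one_div, add_neg_cancel, Real.rpow_zero]
  · simp only [Function.const_apply, RCLike.norm_ofReal, abs_of_pos hc, Finset.prod_const,
      Finset.card_univ, c]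
    rw [← Real.rpow_natCast, ← Real.rpow_mul hN.le]
    congr 1
    ring

theorem prodSupNorm_proj_divNat {𝕜 : Type*} [RCLike 𝕜] (p : ℝ≥0∞) [Fact (1 ≤ p)] (hp : p ≠ ∞)
    {d : ℕ} (hd : 0 < d) (k : ℕ) :
    prodSupNorm (fun j : Fin (d * k) =>
        (PiLp.proj p (fun _ : Fin d => 𝕜) j.divNat : PiLp p (fun _ : Fin d => 𝕜) →L[𝕜] 𝕜)) =
      (d : ℝ) ^ (-((d * k : ℕ) : ℝ) / p.toReal) := by
  set ψ : Fin (d * k) → (PiLp p (fun _ : Fin d => 𝕜) →L[𝕜] 𝕜) :=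
    fun j => PiLp.proj p (fun _ : Fin d => 𝕜) j.divNat
  have : Nonempty (Fin d) := ⟨⟨0, hd⟩⟩
  have hprod (x : PiLp p (fun _ : Fin d => 𝕜)) : ‖∏ j, ψ j x‖ = (∏ v, ‖x v‖) ^ k := by
    change ‖∏ j : Fin (d * k), x j.divNat‖ = _
    rw [Fin.prod_comp_divNat fun v => x v, norm_prod, ← Finset.prod_pow]
    simp only [norm_pow]
  have hvalue : (d : ℝ) ^ (-((d * k : ℕ) : ℝ) / p.toReal) =
      ((d : ℝ) ^ (-(d : ℝ) / p.toReal)) ^ k := by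
    rw [← Real.rpow_natCast _ k, ← Real.rpow_mul (Nat.cast_nonneg d)]
    push_cast
    ring_nf
  rw [hvalue]
  refine le_antisymm (prodSupNorm_le _ fun x hx => ?_) ?_
  · rw [hprod]
    gcongr
    calc ∏ v, ‖x v‖ ≤ (d : ℝ) ^ (-(d : ℝ) / p.toReal) * ‖x‖ ^ d := by
          simpa using PiLp.prod_norm_apply_le hp x
      _ ≤ (d : ℝ) ^ (-(d : ℝ) / p.toReal) :=
          mul_le_of_le_one_right (by positivity) (pow_le_one₀ (norm_nonneg x) hx)
  · obtain ⟨x₀, hx₀, hprod₀⟩ :=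
      PiLp.exists_norm_eq_one_prod_norm_apply_eq (𝕜 := 𝕜) (ι := Fin d) p hp
    rw [Fintype.card_fin] at hprod₀
    rw [← hprod₀, ← hprod]
    exact le_prodSupNorm ψ hx₀.le

theorem polarizationConstant_lp_lower_bound_general {𝕜 : Type*} [RCLike 𝕜]
    (p : ℝ≥0∞) [Fact (1 ≤ p)] (hp2 : p < 2) (d k : ℕ) (hd : 1 ≤ d)
    (n : ℕ) (hn : n = d * k) :
    (∃ ψ : Fin n → (PiLp p (fun _ : Fin d => 𝕜) →L[𝕜] 𝕜),
        (∀ j, ‖ψ j‖ = 1) ∧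
          prodSupNorm ψ = (d : ℝ) ^ (-(n : ℝ) / p.toReal)) ∧
      (d : ℝ) ^ ((n : ℝ) / p.toReal)
        ≤ polarizationConstant 𝕜 (PiLp p (fun _ : Fin d => 𝕜)) n := by
  subst hn
  set ψ : Fin (d * k) → (PiLp p (fun _ : Fin d => 𝕜) →L[𝕜] 𝕜) :=
    fun j => PiLp.proj p (fun _ : Fin d => 𝕜) j.divNat
  have hψ (j) : ‖ψ j‖ = 1 := PiLp.norm_proj_eq_one p _
  have hsup : prodSupNorm ψ = (d : ℝ) ^ (-((d * k : ℕ) : ℝ) / p.toReal) :=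
    prodSupNorm_proj_divNat p hp2.ne_top hd k
  refine ⟨⟨ψ, hψ, hsup⟩, ?_⟩
  calc (d : ℝ) ^ (((d * k : ℕ) : ℝ) / p.toReal) = (∏ j, ‖ψ j‖) / prodSupNorm ψ := by
        rw [Finset.prod_eq_one fun j _ => hψ j, hsup, neg_div, Real.rpow_neg (Nat.cast_nonneg d),
          one_div, inv_inv]
    _ ≤ _ := div_prodSupNorm_le_polarizationConstant ψ

/-- For 1 ≤ p < 2 and n = dk, there are norm-one functionals on `ℓ_p^d` (k copies of each
coordinate functional) whose product has sup norm exactly `d^(-n/p)`; consequently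
`c_n(ℓ_p^d) ≥ d^(n/p)`. -/
theorem polarizationConstant_lp_lower_bound {𝕜 : Type*} [RCLike 𝕜]
    (p : ℝ≥0∞) [Fact (1 ≤ p)] (hp2 : p < 2) (d k : ℕ) (hd : 1 ≤ d) (hk : 1 ≤ k)
    (n : ℕ) (hn : n = d * k) :
    (∃ ψ : Fin n → (PiLp p (fun _ : Fin d => 𝕜) →L[𝕜] 𝕜),
        (∀ j, ‖ψ j‖ = 1) ∧
          prodSupNorm ψ = (d : ℝ) ^ (-(n : ℝ) / p.toReal)) ∧
      (d : ℝ) ^ ((n : ℝ) / p.toReal)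
        ≤ polarizationConstant 𝕜 (PiLp p (fun _ : Fin d => 𝕜)) n :=
  polarizationConstant_lp_lower_bound_general p hp2 d k hd n hn
end

section
/- Let P : X → ℂ be a continuous n-homogeneous polynomial on a complex Banach space X (n ≥ 2). Then for any two vectors w, z in the closed unit ball of X, |P(w) − P(z)| ≤ n·e·‖P‖·‖w − z‖, where ‖P‖ = sup_{‖x‖≤1} |P(x)|. -/
/-!
Restrict `P` to the complex line through `z` and `w`, `g ζ = P (z + ζ • (w - z))`. Points within
distance `R` of the real segment `[0, 1]` are sent into the ball of radius `1 + R ‖w - z‖`, on which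
`‖P‖ ≤ S (1 + R ‖w - z‖) ^ n` by homogeneity; the Cauchy estimate along the segment and the mean
value inequality give `‖P w - P z‖ ≤ S (1 + R ‖w - z‖) ^ n / R`. The radius
`R = 1 / ((n - 1) ‖w - z‖)` turns this into Harris's constant `n ^ n / (n - 1) ^ (n - 1)`, and
`(1 + 1 / (n - 1)) ^ (n - 1) ≤ e`.
-/

open Metric Set

theorem Complex.norm_sub_le_of_forall_mem_sphere_norm_le {F : Type*} [NormedAddCommGroup F]
    [NormedSpace ℂ F] {g : ℂ → F} (hg : Differentiable ℂ g) {R C : ℝ} (hR : 0 < R)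
    (hC : ∀ t ∈ Icc (0 : ℝ) 1, ∀ ζ ∈ sphere (t : ℂ) R, ‖g ζ‖ ≤ C) :
    ‖g 1 - g 0‖ ≤ C / R := by
  have hderiv (t : ℝ) : HasDerivAt (g ∘ (↑)) (deriv g t) t := by
    simpa using (hg (t : ℂ)).hasDerivAt.scomp t Complex.ofRealCLM.hasDerivAt
  simpa using norm_image_sub_le_of_norm_deriv_le_segment_01' (f := g ∘ (↑))
    (fun t _ => (hderiv t).hasDerivWithinAt) fun t ht =>
      Complex.norm_deriv_le_of_forall_mem_sphere_norm_le hR hg.diffContOnCl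
        (hC t (Ico_subset_Icc_self ht))

namespace ContinuousMultilinearMap

variable {E F : Type*} [NormedAddCommGroup E] [NormedAddCommGroup F] {n : ℕ}

lemma bddAbove_norm_apply_diag {𝕜 : Type*} [NontriviallyNormedField 𝕜] [NormedSpace 𝕜 E]
    [NormedSpace 𝕜 F] (M : ContinuousMultilinearMap 𝕜 (fun _ : Fin n => E) F) :
    BddAbove {r : ℝ | ∃ x : E, ‖x‖ ≤ 1 ∧ r = ‖M (fun _ => x)‖} := by
  refine ⟨‖M‖, ?_⟩
  rintro r ⟨x, hx, rfl⟩
  calc ‖M (fun _ => x)‖ ≤ ‖M‖ * ‖x‖ ^ n := by simpa using M.le_opNorm (fun _ => x)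
    _ ≤ ‖M‖ * 1 := by gcongr; exact pow_le_one₀ (norm_nonneg x) hx
    _ = ‖M‖ := mul_one _

lemma norm_apply_diag_le_mul_pow {𝕜 : Type*} [RCLike 𝕜] [NormedSpace 𝕜 E] [NormedSpace 𝕜 F]
    (M : ContinuousMultilinearMap 𝕜 (fun _ : Fin n => E) F)
    {S : ℝ} (hS : ∀ x : E, ‖x‖ ≤ 1 → ‖M (fun _ => x)‖ ≤ S) (y : E) :
    ‖M (fun _ => y)‖ ≤ S * ‖y‖ ^ n := by
  rcases eq_or_ne y 0 with rfl | hy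
  · cases n with
    | zero => simpa using hS 0 (by simp)
    | succ k => simp [M.map_coord_zero (m := fun _ => 0) 0 rfl]
  · have hy' : (0 : ℝ) < ‖y‖ := norm_pos_iff.mpr hy
    set u : E := (‖y‖⁻¹ : 𝕜) • y
    have hu : ‖u‖ = 1 := by simp [u, norm_smul, hy'.ne']
    have hyu : y = (‖y‖ : 𝕜) • u := by simp [u, smul_smul, hy'.ne']
    have hMy : M (fun _ => y) = (‖y‖ : 𝕜) ^ n • M (fun _ => u) := by
      conv_lhs => rw [hyu]
      simpa using M.map_smul_univ (fun _ => (‖y‖ : 𝕜)) (fun _ => u)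
    calc ‖M (fun _ => y)‖ = ‖y‖ ^ n * ‖M (fun _ => u)‖ := by simp [hMy, norm_smul]
      _ ≤ ‖y‖ ^ n * S := by gcongr; exact hS u hu.le
      _ = S * ‖y‖ ^ n := mul_comm _ _

lemma norm_apply_diag_sub_le_div [NormedSpace ℂ E] [NormedSpace ℂ F]
    (M : ContinuousMultilinearMap ℂ (fun _ : Fin n => E) F)
    {S : ℝ} (hS : ∀ x : E, ‖x‖ ≤ 1 → ‖M (fun _ => x)‖ ≤ S) {w z : E} (hw : ‖w‖ ≤ 1)
    (hz : ‖z‖ ≤ 1) {R : ℝ} (hR : 0 < R) :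
    ‖M (fun _ => w) - M (fun _ => z)‖ ≤ S * (1 + R * ‖w - z‖) ^ n / R := by
  set g : ℂ → F := fun ζ => M (fun _ => z + ζ • (w - z))
  have hg : Differentiable ℂ g :=
    ((M.contDiff (n := 1)).differentiable one_ne_zero).comp (by fun_prop)
  have hS0 : 0 ≤ S := (norm_nonneg _).trans (hS 0 (by simp))
  have hline (t : ℝ) (ht : t ∈ Icc (0 : ℝ) 1) (ζ : ℂ) (hζ : ζ ∈ sphere (t : ℂ) R) :
      ‖g ζ‖ ≤ S * (1 + R * ‖w - z‖) ^ n := by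
    have hseg : ‖z + (t : ℂ) • (w - z)‖ ≤ 1 := by
      simpa [Complex.coe_smul] using
        (convex_closedBall (0 : E) 1).add_smul_sub_mem (by simpa using hz) (by simpa using hw) ht
    have hpoint : ‖z + ζ • (w - z)‖ ≤ 1 + R * ‖w - z‖ :=
      calc ‖z + ζ • (w - z)‖ = ‖(z + (t : ℂ) • (w - z)) + (ζ - t) • (w - z)‖ := by
            rw [sub_smul]; abel_nf
        _ ≤ ‖z + (t : ℂ) • (w - z)‖ + ‖ζ - t‖ * ‖w - z‖ := (norm_add_le _ _).trans_eq
            (by rw [norm_smul])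
        _ ≤ 1 + R * ‖w - z‖ := by rw [← dist_eq_norm, mem_sphere.mp hζ]; gcongr
    calc ‖g ζ‖ ≤ S * ‖z + ζ • (w - z)‖ ^ n := M.norm_apply_diag_le_mul_pow hS _
      _ ≤ S * (1 + R * ‖w - z‖) ^ n := by gcongr
  simpa [g] using Complex.norm_sub_le_of_forall_mem_sphere_norm_le hg hR hline

end ContinuousMultilinearMap

theorem homogeneous_polynomial_lipschitz_on_ball_general
    {X : Type*} [NormedAddCommGroup X] [NormedSpace ℂ X]
    {n : ℕ} (hn : 2 ≤ n) (M : ContinuousMultilinearMap ℂ (fun _ : Fin n => X) ℂ)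
    (P : X → ℂ) (hP : ∀ x, P x = M (fun _ => x))
    (w z : X) (hw : ‖w‖ ≤ 1) (hz : ‖z‖ ≤ 1) :
    ‖P w - P z‖ ≤ n * Real.exp 1 *
      sSup {r : ℝ | ∃ x : X, ‖x‖ ≤ 1 ∧ r = ‖P x‖} * ‖w - z‖ := by
  obtain rfl : P = fun x => M (fun _ => x) := funext hP
  set S := sSup {r : ℝ | ∃ x : X, ‖x‖ ≤ 1 ∧ r = ‖M (fun _ => x)‖}
  have hS (x : X) (hx : ‖x‖ ≤ 1) : ‖M (fun _ => x)‖ ≤ S :=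
    le_csSup M.bddAbove_norm_apply_diag ⟨x, hx, rfl⟩
  have hS0 : 0 ≤ S := (norm_nonneg _).trans (hS 0 (by simp))
  rcases eq_or_ne w z with rfl | hwz
  · simp
  have hδ : 0 < ‖w - z‖ := norm_pos_iff.mpr (sub_ne_zero.mpr hwz)
  obtain ⟨m, rfl⟩ : ∃ m, n = m + 1 := ⟨n - 1, by omega⟩
  have hm : (0 : ℝ) < m := by exact_mod_cast (by omega : 0 < m)
  calc ‖M (fun _ => w) - M (fun _ => z)‖
      ≤ S * (1 + (m * ‖w - z‖)⁻¹ * ‖w - z‖) ^ (m + 1) / (m * ‖w - z‖)⁻¹ :=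
        M.norm_apply_diag_sub_le_div hS hw hz (by positivity)
    _ = S * ((1 + (m : ℝ)⁻¹) ^ m * (m + 1)) * ‖w - z‖ := by
        rw [mul_inv, inv_mul_cancel_right₀ hδ.ne', pow_succ]
        field_simp
    _ ≤ S * (Real.exp 1 * (m + 1)) * ‖w - z‖ := by
        gcongr
        exact Real.one_add_inv_pow_le_exp
    _ = ((m + 1 : ℕ) : ℝ) * Real.exp 1 * S * ‖w - z‖ := by push_cast; ring

/-- Lipschitz estimate on the unit ball for a continuous n-homogeneous polynomial
(the diagonal of a continuous n-multilinear map) on a complex Banach space: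
|P(w) − P(z)| ≤ n·e·‖P‖·‖w − z‖, where ‖P‖ is the sup of |P| on the unit ball. -/
theorem homogeneous_polynomial_lipschitz_on_ball
    {X : Type*} [NormedAddCommGroup X] [NormedSpace ℂ X] [CompleteSpace X]
    {n : ℕ} (hn : 2 ≤ n) (M : ContinuousMultilinearMap ℂ (fun _ : Fin n => X) ℂ)
    (P : X → ℂ) (hP : ∀ x, P x = M (fun _ => x))
    (w z : X) (hw : ‖w‖ ≤ 1) (hz : ‖z‖ ≤ 1) :
    ‖P w - P z‖ ≤ n * Real.exp 1 *
      sSup {r : ℝ | ∃ x : X, ‖x‖ ≤ 1 ∧ r = ‖P x‖} * ‖w - z‖ :=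
  homogeneous_polynomial_lipschitz_on_ball_general hn M P hP w z hw hz
end

section
/- Let P : ℂ^d → ℂ be an n-homogeneous polynomial (n ≥ 1) with supremum norm ‖P‖ over the closed ℓ_∞ unit ball. Suppose w₁,…,w_M are points of the unit ball such that every point of the d-torus 𝕋^d is within ℓ_∞-distance 1/(2ne) of some w_i, and suppose |P(w_i)| ≤ R for all i. Then ‖P‖ ≤ 2R. -/
/-!
Let `S` be the maximum of `‖P‖` on the closed unit polydisc. Moving one coordinate at a time to
the unit circle never decreases `‖P‖` (one-variable maximum modulus), so `S` is attained at a
point `z` of the torus. Homogeneity gives `‖P x‖ ≤ S ‖x‖ ^ n`; Cauchy's estimate on the circle of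
radius `1 / (n ‖y‖)` in the complex line `z + ℂ y`, where `‖P‖ ≤ S (1 + 1/n) ^ n ≤ e S`, then
bounds `‖DP(z) y‖` by `n e S ‖y‖`. So `P` is `n e S`-Lipschitz on the polydisc, and a net point
`wᵢ` with `‖z - wᵢ‖ ≤ 1/(2ne)` gives `S ≤ R + S/2`.
-/

open Metric Function

section HomogeneousPolynomial

variable {𝕜 E F : Type*} [RCLike 𝕜] [NormedAddCommGroup E] [NormedSpace 𝕜 E]
  [NormedAddCommGroup F] [NormedSpace 𝕜 F] {n : ℕ}
  (M : ContinuousMultilinearMap 𝕜 (fun _ : Fin n => E) F)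

theorem ContinuousMultilinearMap.map_diag_smul (c : 𝕜) (x : E) :
    M (fun _ => c • x) = c ^ n • M (fun _ => x) := by
  simpa using M.map_smul_univ (fun _ => c) (fun _ => x)

theorem ContinuousMultilinearMap.norm_map_diag_le_mul_norm_pow {S : ℝ}
    (hS : ∀ y : E, ‖y‖ ≤ 1 → ‖M (fun _ => y)‖ ≤ S) (x : E) :
    ‖M (fun _ => x)‖ ≤ S * ‖x‖ ^ n := by
  rcases eq_or_ne x 0 with rfl | hx
  · have h0 : ‖M (fun _ => (0 : E))‖ = ‖(0 : 𝕜)‖ ^ n * ‖M (fun _ => (0 : E))‖ := by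
      rw [← norm_pow, ← norm_smul, ← M.map_diag_smul, smul_zero]
    rw [h0, norm_zero, norm_zero, mul_comm]
    exact mul_le_mul_of_nonneg_right (hS 0 (by simp)) (by positivity)
  · have hx' : 0 < ‖x‖ := norm_pos_iff.2 hx
    have hunit : ‖(‖x‖⁻¹ : 𝕜) • x‖ ≤ 1 := by
      rw [norm_smul, norm_inv, RCLike.norm_ofReal, abs_norm, inv_mul_cancel₀ hx'.ne']
    have hx_eq : x = (‖x‖ : 𝕜) • (‖x‖⁻¹ : 𝕜) • x := by
      rw [smul_smul, ← RCLike.ofReal_inv, ← RCLike.ofReal_mul, mul_inv_cancel₀ hx'.ne',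
        RCLike.ofReal_one, one_smul]
    rw [hx_eq, M.map_diag_smul, norm_smul, norm_pow, RCLike.norm_ofReal, abs_norm, ← hx_eq,
      mul_comm]
    exact mul_le_mul_of_nonneg_right (hS _ hunit) (by positivity)

theorem ContinuousMultilinearMap.differentiable_diag :
    Differentiable 𝕜 (fun x : E => M fun _ => x) :=
  ((M.contDiff (n := 1)).comp (contDiff_pi.2 fun _ => contDiff_id)).differentiable one_ne_zero

end HomogeneousPolynomial

section CauchyEstimate

variable {E F : Type*} [NormedAddCommGroup E] [NormedSpace ℂ E]
  [NormedAddCommGroup F] [NormedSpace ℂ F]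

theorem norm_fderiv_le_of_norm_le_mul_norm_pow {n : ℕ} (hn : 1 ≤ n) {f : E → F}
    (hf : Differentiable ℂ f) {S : ℝ} (hS0 : 0 ≤ S) (hS : ∀ x, ‖f x‖ ≤ S * ‖x‖ ^ n)
    {z : E} (hz : ‖z‖ ≤ 1) : ‖fderiv ℂ f z‖ ≤ n * Real.exp 1 * S := by
  have hn' : (0 : ℝ) < n := by exact_mod_cast hn
  refine ContinuousLinearMap.opNorm_le_bound _ (by positivity) fun y => ?_
  rcases eq_or_ne y 0 with rfl | hy
  · simp
  have hy' : 0 < ‖y‖ := norm_pos_iff.2 hy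
  set r : ℝ := (n * ‖y‖)⁻¹
  have hline : HasDerivAt (fun t : ℂ => z + t • y) y 0 := by
    simpa using ((hasDerivAt_id (0 : ℂ)).smul_const y).const_add z
  have hderiv : HasDerivAt (fun t : ℂ => f (z + t • y)) (fderiv ℂ f z y) 0 :=
    (hf z).hasFDerivAt.comp_hasDerivAt_of_eq (0 : ℂ) hline (by simp)
  have hsphere : ∀ t ∈ sphere (0 : ℂ) r, ‖f (z + t • y)‖ ≤ S * Real.exp 1 := by
    intro t ht
    rw [mem_sphere_zero_iff_norm] at ht
    have hle : ‖z + t • y‖ ≤ 1 + (n : ℝ)⁻¹ :=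
      calc ‖z + t • y‖ ≤ ‖z‖ + ‖t‖ * ‖y‖ := (norm_add_le _ _).trans_eq (by rw [norm_smul])
        _ ≤ 1 + (n : ℝ)⁻¹ := by
          simp only [ht, r]
          rw [mul_inv, inv_mul_cancel_right₀ hy'.ne']
          linarith
    calc ‖f (z + t • y)‖ ≤ S * ‖z + t • y‖ ^ n := hS _
      _ ≤ S * (1 + (n : ℝ)⁻¹) ^ n := by gcongr
      _ ≤ S * Real.exp 1 := by gcongr; exact Real.one_add_inv_pow_le_exp
  have hcauchy := Complex.norm_deriv_le_of_forall_mem_sphere_norm_le (by positivity)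
    (Differentiable.diffContOnCl (by fun_prop)) hsphere
  rw [hderiv.deriv] at hcauchy
  calc ‖fderiv ℂ f z y‖ ≤ S * Real.exp 1 / r := hcauchy
    _ = n * Real.exp 1 * S * ‖y‖ := by simp only [r]; field_simp

theorem ContinuousMultilinearMap.norm_map_diag_sub_le {n : ℕ} (hn : 1 ≤ n)
    (M : ContinuousMultilinearMap ℂ (fun _ : Fin n => E) F) {S : ℝ}
    (hS : ∀ y : E, ‖y‖ ≤ 1 → ‖M (fun _ => y)‖ ≤ S) {a b : E} (ha : ‖a‖ ≤ 1) (hb : ‖b‖ ≤ 1) :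
    ‖M (fun _ => a) - M (fun _ => b)‖ ≤ n * Real.exp 1 * S * ‖a - b‖ := by
  have hS0 : 0 ≤ S := (norm_nonneg _).trans (hS 0 (by simp))
  exact (convex_closedBall (0 : E) 1).norm_image_sub_le_of_norm_fderiv_le
    (fun x _ => M.differentiable_diag x)
    (fun x hx => norm_fderiv_le_of_norm_le_mul_norm_pow hn M.differentiable_diag hS0
      (M.norm_map_diag_le_mul_norm_pow hS) (mem_closedBall_zero_iff.1 hx))
    (mem_closedBall_zero_iff.2 hb) (mem_closedBall_zero_iff.2 ha)

end CauchyEstimate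

section MaximumModulus

variable {ι F : Type*} [NormedAddCommGroup F] [NormedSpace ℂ F]

def unitTorus (ι : Type*) : Set (ι → ℂ) := {z | ∀ j, ‖z j‖ = 1}

theorem Complex.exists_norm_eq_one_norm_le {g : ℂ → F} (hg : DiffContOnCl ℂ g (ball 0 1))
    {t : ℂ} (ht : ‖t‖ ≤ 1) : ∃ s : ℂ, ‖s‖ = 1 ∧ ‖g t‖ ≤ ‖g s‖ := by
  obtain ⟨s, hs, hmax⟩ := Complex.exists_mem_frontier_isMaxOn_norm isBounded_ball
    ⟨0, mem_ball_self one_pos⟩ hg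
  rw [frontier_ball 0 one_ne_zero, mem_sphere_zero_iff_norm] at hs
  rw [closure_ball 0 one_ne_zero] at hmax
  exact ⟨s, hs, hmax (mem_closedBall_zero_iff.2 ht)⟩

theorem exists_mem_unitTorus_norm_le [Fintype ι] {f : (ι → ℂ) → F} (hf : Differentiable ℂ f)
    {x : ι → ℂ} (hx : ‖x‖ ≤ 1) : ∃ z ∈ unitTorus ι, ‖f x‖ ≤ ‖f z‖ := by
  classical
  suffices key : ∀ (s : Finset ι) (y : ι → ℂ), (∀ j, ‖y j‖ ≤ 1) → (∀ j ∉ s, ‖y j‖ = 1) →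
      ∃ z ∈ unitTorus ι, ‖f y‖ ≤ ‖f z‖ from
    key Finset.univ x ((pi_norm_le_iff_of_nonneg zero_le_one).1 hx) (by simp)
  intro s
  induction s using Finset.induction_on with
  | empty => exact fun y _ hy_out => ⟨y, fun j => hy_out j (Finset.notMem_empty j), le_rfl⟩
  | insert j s _ ih =>
    intro y hy hy_out
    obtain ⟨c, hc, hfc⟩ := Complex.exists_norm_eq_one_norm_le
      (hf.comp fun t => (hasFDerivAt_update y (i := j) t).differentiableAt).diffContOnCl (hy j)
    have hyc : ∀ k, ‖update y j c k‖ ≤ 1 := fun k => by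
      rcases eq_or_ne k j with rfl | hk <;> simp [*]
    have hyc_out : ∀ k ∉ s, ‖update y j c k‖ = 1 := fun k hk => by
      rcases eq_or_ne k j with rfl | hkj
      · simpa
      · simpa [hkj] using hy_out k (by simp [hkj, hk])
    obtain ⟨z, hz, hfz⟩ := ih (update y j c) hyc hyc_out
    refine ⟨z, hz, ?_⟩
    calc ‖f y‖ = ‖f (update y j (y j))‖ := by rw [update_eq_self]
      _ ≤ ‖f (update y j c)‖ := hfc
      _ ≤ ‖f z‖ := hfz

end MaximumModulus

/-- If an n-homogeneous polynomial on ℂ^d (with the sup norm) is bounded by R on a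
1/(2ne)-net (in ℓ_∞ distance) of the d-torus consisting of points of the unit ball,
then its sup norm over the closed unit polydisc is at most 2R. -/
theorem sup_norm_le_of_bound_on_net
    {d n m : ℕ} (hn : 1 ≤ n)
    (M : ContinuousMultilinearMap ℂ (fun _ : Fin n => (Fin d → ℂ)) ℂ)
    (P : (Fin d → ℂ) → ℂ) (hP : ∀ x, P x = M (fun _ => x))
    (w : Fin m → (Fin d → ℂ)) (hw : ∀ i, ‖w i‖ ≤ 1)
    (hnet : ∀ z : Fin d → ℂ, (∀ j, ‖z j‖ = 1) →
      ∃ i, ‖z - w i‖ ≤ 1 / (2 * n * Real.exp 1))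
    (R : ℝ) (hbound : ∀ i, ‖P (w i)‖ ≤ R) :
    ∀ x : Fin d → ℂ, ‖x‖ ≤ 1 → ‖P x‖ ≤ 2 * R := by
  obtain rfl : P = fun x => M fun _ => x := funext hP
  obtain ⟨x₀, hx₀, hmax⟩ := (isCompact_closedBall (0 : Fin d → ℂ) 1).exists_isMaxOn
    (nonempty_closedBall.2 zero_le_one) M.differentiable_diag.continuous.norm.continuousOn
  set S := ‖M fun _ => x₀‖
  have hS : ∀ y : Fin d → ℂ, ‖y‖ ≤ 1 → ‖M fun _ => y‖ ≤ S :=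
    fun y hy => hmax (mem_closedBall_zero_iff.2 hy)
  obtain ⟨z, hz, hx₀z⟩ := exists_mem_unitTorus_norm_le M.differentiable_diag
    (mem_closedBall_zero_iff.1 hx₀)
  obtain ⟨i, hi⟩ := hnet z hz
  have hz1 : ‖z‖ ≤ 1 := (pi_norm_le_iff_of_nonneg zero_le_one).2 fun j => (hz j).le
  have hS_half : S ≤ R + S / 2 :=
    calc S ≤ ‖M fun _ => z‖ := hx₀z
      _ ≤ ‖M fun _ => w i‖ + ‖(M fun _ => z) - M fun _ => w i‖ := norm_le_norm_add_norm_sub' _ _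
      _ ≤ R + n * Real.exp 1 * S * (1 / (2 * n * Real.exp 1)) := by
        gcongr
        · exact hbound i
        · exact (M.norm_map_diag_sub_le hn hS hz1 (hw i)).trans (by gcongr)
      _ = R + S / 2 := by field_simp
  intro x hx
  linarith [hS x hx]
end

section
/- For every n, d ≥ 1 there exist signs a_k^j ∈ {−1, +1} (1 ≤ j ≤ n, 1 ≤ k ≤ d) such that the n-homogeneous polynomial P(z) = ∏_{j=1}^n ∑_{k=1}^d a_k^j z_k on ℓ_∞^d(ℂ) satisfies ‖P‖ ≤ 2·√((24n)^d · d^n), while each linear factor has norm ∑_{k=1}^d |a_k^j| = d. -/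
/-!
Take a partial Hadamard matrix: `N ≤ 2d` sign vectors `w_s ∈ {±1}^d` (Walsh characters of
`(ℤ/2)^t`, restricted to `d ≤ 2^t` points) whose columns are orthogonal, so that
`∑_s |⟨w_s, z⟩|² = N ‖z‖₂² ≤ N d` whenever `‖z‖_∞ ≤ 1`. Use the rows cyclically as the `n` linear
forms. Each row occurs at most `n / N + 1` times, so the squares of the `n` factors sum to at
most `(n + N) d`, and AM-GM bounds the square of their product by
`((1 + N / n) d)^n ≤ e^N d^n ≤ e^{2d} d^n ≤ (24 n)^d d^n`.
-/

open Finset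

namespace Real

theorem prod_le_mean_pow {ι : Type*} (s : Finset ι) (f : ι → ℝ) (hf : ∀ i ∈ s, 0 ≤ f i) :
    ∏ i ∈ s, f i ≤ ((∑ i ∈ s, f i) / #s) ^ #s := by
  rcases s.eq_empty_or_nonempty with rfl | hs
  · simp
  have hcard : (0 : ℝ) < #s := by exact_mod_cast hs.card_pos
  have amgm := geom_mean_le_arith_mean_weighted s (fun _ ↦ (#s : ℝ)⁻¹) f
    (fun _ _ ↦ by positivity) (by simp [hcard.ne']) hf
  rw [finsetProd_rpow s f hf, ← mul_sum, inv_mul_eq_div] at amgm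
  calc ∏ i ∈ s, f i = ((∏ i ∈ s, f i) ^ (#s : ℝ)⁻¹) ^ #s := by
        rw [← rpow_natCast, ← rpow_mul (prod_nonneg hf), inv_mul_cancel₀ hcard.ne', rpow_one]
    _ ≤ _ := by gcongr; exact rpow_nonneg (prod_nonneg hf) _

theorem one_add_div_pow_le_exp (x : ℝ) {n : ℕ} (hx : -x ≤ n) : (1 + x / n) ^ n ≤ exp x := by
  simpa [neg_div] using one_sub_div_pow_le_exp_neg (t := -x) hx

theorem exp_two_mul_le_eight_pow (d : ℕ) : exp (2 * d) ≤ 8 ^ d := by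
  rw [mul_comm, exp_nat_mul]
  gcongr
  have : exp 2 = exp 1 ^ 2 := by rw [← exp_nat_mul]; norm_num
  nlinarith [exp_one_lt_d9, exp_pos 1]

end Real

theorem sum_range_mod_le (g : ℕ → ℝ) (hg : ∀ m, 0 ≤ g m) (n : ℕ) {N : ℕ} (hN : 0 < N) :
    ∑ j ∈ range n, g (j % N) ≤ (n / N + 1 : ℕ) * ∑ m ∈ range N, g m := by
  have periodic (q : ℕ) : ∑ j ∈ range (N * q), g (j % N) = q * ∑ m ∈ range N, g m := by
    induction q with
    | zero => simp
    | succ q ih =>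
      rw [mul_add_one, sum_range_add, ih]
      simp_rw [Nat.mul_add_mod]
      rw [sum_congr rfl fun m hm ↦ congrArg g (Nat.mod_eq_of_lt (mem_range.1 hm))]
      push_cast; ring
  rw [← periodic]
  refine sum_le_sum_of_subset_of_nonneg (range_subset_range.2 ?_) fun _ _ _ ↦ hg _
  rw [mul_add_one, mul_comm]
  exact (Nat.lt_div_mul_add hN).le

def walsh {α : Type*} [Fintype α] (s x : α → Bool) : ℝ :=
  ∏ i, if s i && x i then -1 else 1

section Walsh

variable {α : Type*} [Fintype α]

theorem walsh_eq_one_or_eq_neg_one (s x : α → Bool) : walsh s x = 1 ∨ walsh s x = -1 := by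
  refine prod_induction _ (fun r : ℝ ↦ r = 1 ∨ r = -1) ?_ (.inl rfl) fun i _ ↦ ?_
  · rintro _ _ (rfl | rfl) (rfl | rfl) <;> norm_num
  · split_ifs <;> simp

theorem sum_walsh_mul_walsh [DecidableEq α] (x y : α → Bool) :
    ∑ s, walsh s x * walsh s y = if x = y then 2 ^ Fintype.card α else 0 := by
  have coord (b c : Bool) : ∑ a : Bool, (if a && b then (-1 : ℝ) else 1) *
      (if a && c then -1 else 1) = if b = c then 2 else 0 := by
    cases b <;> cases c <;> norm_num
  simp_rw [walsh, ← prod_mul_distrib]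
  refine (Fintype.prod_sum fun i (a : Bool) ↦
    (if a && x i then (-1 : ℝ) else 1) * (if a && y i then -1 else 1)).symm.trans ?_
  simp_rw [coord]
  split_ifs with hxy
  · simp [hxy]
  · obtain ⟨i, hi⟩ := Function.ne_iff.1 hxy
    exact prod_eq_zero (mem_univ i) (if_neg hi)

end Walsh

theorem sum_norm_sq_eq_of_orthogonal {𝕜 ι κ : Type*} [RCLike 𝕜] [Fintype ι] [Fintype κ]
    [DecidableEq κ] (w : ι → κ → ℝ) (c : ℝ)
    (hw : ∀ k l, ∑ s, w s k * w s l = if k = l then c else 0) (z : κ → 𝕜) :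
    ∑ s, ‖∑ k, (w s k : 𝕜) * z k‖ ^ 2 = c * ∑ k, ‖z k‖ ^ 2 := by
  apply RCLike.ofReal_injective (K := 𝕜)
  push_cast
  simp_rw [← RCLike.mul_conj, map_sum, map_mul, RCLike.conj_ofReal, sum_mul_sum, mul_sum]
  rw [sum_comm]
  refine sum_congr rfl fun k _ ↦ ?_
  rw [sum_comm]
  simp_rw [show ∀ s l, (w s k : 𝕜) * z k * ((w s l : 𝕜) * (starRingEnd 𝕜) (z l)) =
      ((w s k * w s l : ℝ) : 𝕜) * (z k * (starRingEnd 𝕜) (z l)) from fun s l ↦ by push_cast; ring,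
    ← sum_mul, ← RCLike.ofReal_sum, hw]
  simp [apply_ite, ite_mul]

theorem exists_sign_matrix_orthogonal_columns {d : ℕ} (hd : 0 < d) :
    ∃ N, 0 < N ∧ N ≤ 2 * d ∧ ∃ w : Fin N → Fin d → ℝ, (∀ s k, w s k = 1 ∨ w s k = -1) ∧
      ∀ k l, ∑ s, w s k * w s l = if k = l then (N : ℝ) else 0 := by
  set t := Nat.log 2 d + 1
  have hdN : d ≤ 2 ^ t := (Nat.lt_pow_succ_log_self one_lt_two d).le
  have hN2d : 2 ^ t ≤ 2 * d := by
    rw [pow_succ']; exact Nat.mul_le_mul_left 2 (Nat.pow_log_le_self 2 hd.ne')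
  let e : Fin (2 ^ t) ≃ (Fin t → Bool) := (Fintype.equivFinOfCardEq (by simp)).symm
  let c : Fin d ↪ (Fin t → Bool) := (Fin.castLEEmb hdN).trans e.toEmbedding
  refine ⟨2 ^ t, by positivity, hN2d, fun s k ↦ walsh (e s) (c k),
    fun s k ↦ walsh_eq_one_or_eq_neg_one _ _, fun k l ↦ ?_⟩
  rw [e.sum_comp fun s ↦ walsh s (c k) * walsh s (c l)]
  simp [sum_walsh_mul_walsh, c.injective.eq_iff]

theorem prod_ofNat_le_exp_mul_pow {N n : ℕ} [NeZero N] (hn : 0 < n) (G : Fin N → ℝ)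
    (hG : ∀ s, 0 ≤ G s) (M : ℝ) (hM : ∑ s, G s ≤ N * M) :
    ∏ j : Fin n, G (Fin.ofNat N j) ≤ Real.exp N * M ^ n := by
  set g : ℕ → ℝ := fun m ↦ G (Fin.ofNat N m)
  have hN : 0 < N := Nat.pos_of_neZero N
  have hM0 : 0 ≤ M := by
    refine (mul_nonneg_iff_of_pos_left (by exact_mod_cast hN : (0 : ℝ) < N)).1 ?_
    exact (sum_nonneg fun s _ ↦ hG s).trans hM
  have hg_mod (j : ℕ) : g (j % N) = g j := by simp [g, Fin.ofNat]
  have hg_range : ∑ m ∈ range N, g m = ∑ s, G s := by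
    rw [← Fin.sum_univ_eq_sum_range]; simp [g]
  have hsum : ∑ j ∈ range n, g j ≤ (n + N) * M :=
    calc ∑ j ∈ range n, g j = ∑ j ∈ range n, g (j % N) := by simp only [hg_mod]
      _ ≤ (n / N + 1 : ℕ) * ∑ m ∈ range N, g m := sum_range_mod_le g (fun _ ↦ hG _) n hN
      _ ≤ (n / N + 1 : ℕ) * (N * M) := by rw [hg_range]; gcongr
      _ ≤ (n + N) * M := by
        rw [← mul_assoc]; gcongr
        exact_mod_cast (add_one_mul (n / N) N).trans_le
          (Nat.add_le_add_right (Nat.div_mul_le_self n N) N)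
  have hn' : (0 : ℝ) < n := by exact_mod_cast hn
  calc ∏ j : Fin n, G (Fin.ofNat N j) = ∏ j ∈ range n, g j := Fin.prod_univ_eq_prod_range g n
    _ ≤ ((∑ j ∈ range n, g j) / n) ^ n := by
      simpa using Real.prod_le_mean_pow (range n) g fun _ _ ↦ hG _
    _ ≤ ((n + N) * M / n) ^ n := by gcongr; exact div_nonneg (sum_nonneg fun _ _ ↦ hG _) hn'.le
    _ = (1 + N / n) ^ n * M ^ n := by rw [← mul_pow]; congr 1; field_simp
    _ ≤ Real.exp N * M ^ n := by
      gcongr; exact Real.one_add_div_pow_le_exp _ (by linarith [(N.cast_nonneg : (0 : ℝ) ≤ N)])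

/-- There exist signs a_k^j ∈ {−1,1} such that the n-homogeneous polynomial
P(z) = ∏_j ∑_k a_k^j z_k on ℓ_∞^d(ℂ) satisfies ‖P‖ ≤ 2√((24n)^d d^n), while each
linear factor z ↦ ∑_k a_k^j z_k has norm ∑_k |a_k^j| = d. -/
theorem exists_signs_small_product (n d : ℕ) (hn : 1 ≤ n) (hd : 1 ≤ d) :
    ∃ a : Fin n → Fin d → ℝ,
      (∀ j k, a j k = 1 ∨ a j k = -1) ∧
      (∀ j, ∑ k, |a j k| = (d : ℝ)) ∧
      ∀ z : Fin d → ℂ, ‖z‖ ≤ 1 →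
        ‖∏ j, ∑ k, (a j k : ℂ) * z k‖
          ≤ 2 * Real.sqrt ((24 * n : ℝ) ^ d * (d : ℝ) ^ n) := by
  obtain ⟨N, hN, hN2d, w, hw_sign, hw_orth⟩ := exists_sign_matrix_orthogonal_columns hd
  have : NeZero N := ⟨hN.ne'⟩
  refine ⟨fun j k ↦ w (Fin.ofNat N j) k, fun j k ↦ hw_sign _ k, fun j ↦ ?_, fun z hz ↦ ?_⟩
  · have habs (s : Fin N) (k : Fin d) : |w s k| = 1 := by
      rcases hw_sign s k with h | h <;> simp [h]
    simp [habs]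
  set L : Fin N → ℂ := fun s ↦ ∑ k, (w s k : ℂ) * z k
  have hL : ∑ s, ‖L s‖ ^ 2 ≤ N * d := by
    refine (sum_norm_sq_eq_of_orthogonal w N hw_orth z).trans_le ?_
    gcongr
    calc ∑ k, ‖z k‖ ^ 2 ≤ ∑ _k : Fin d, (1 : ℝ) :=
          sum_le_sum fun k _ ↦ pow_le_one₀ (norm_nonneg _) ((norm_le_pi_norm z k).trans hz)
      _ = d := by simp
  have hprod : (∏ j : Fin n, ‖L (Fin.ofNat N j)‖) ^ 2 ≤ Real.exp N * d ^ n := by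
    rw [← prod_pow]; exact prod_ofNat_le_exp_mul_pow hn _ (fun _ ↦ sq_nonneg _) d hL
  have hexp : Real.exp N ≤ (24 * n) ^ d :=
    calc Real.exp N ≤ Real.exp (2 * d) := by gcongr; exact_mod_cast hN2d
      _ ≤ 8 ^ d := Real.exp_two_mul_le_eight_pow d
      _ ≤ (24 * n) ^ d := by gcongr; linarith [(by exact_mod_cast hn : (1 : ℝ) ≤ n)]
  rw [norm_prod]
  calc ∏ j : Fin n, ‖L (Fin.ofNat N j)‖ ≤ √((24 * n) ^ d * d ^ n) :=
        (le_abs_self _).trans (Real.abs_le_sqrt (hprod.trans (by gcongr)))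
    _ ≤ 2 * √((24 * n) ^ d * d ^ n) := le_mul_of_one_le_left (Real.sqrt_nonneg _) one_le_two
end

section
/- Let 1 ≤ p < ∞ and d ≥ 1. Then exp(∫_{S^{d−1}} log(1/‖z‖_p) dS(z)) ≤ (Vol(B_{ℓ_p^d}) / Vol(B_{ℓ_2^d}))^{1/d}, where dS is the normalized surface measure on the Euclidean unit sphere in ℝ^d. -/
/-!
In polar coordinates `x = r • z` the set `{x | ‖x‖_p ≤ 1}` is `{r ≤ ‖z‖_p⁻¹}`, so its volume is
`Vol(B_2) * ∫ ‖z‖_p^{-d} dS(z)`. Jensen's inequality for `exp` (the integral AM-GM inequality)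
applied to `‖z‖_p^{-d}` bounds `exp (d * ∫ log (1 / ‖z‖_p) dS)` by that integral.
-/

open MeasureTheory

/-- The normalized (uniform probability) surface measure on the unit sphere of
`EuclideanSpace ℝ (Fin d)`. -/
noncomputable def unifSphere (d : ℕ) :
    Measure (Metric.sphere (0 : EuclideanSpace ℝ (Fin d)) 1) :=
  ((volume : Measure (EuclideanSpace ℝ (Fin d))).toSphere Set.univ)⁻¹ •
    (volume : Measure (EuclideanSpace ℝ (Fin d))).toSphere

open Metric Set Real
open scoped ENNReal

namespace EuclideanSpace

variable {ι : Type*} [Fintype ι] {p : ℝ}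

noncomputable def pNorm (p : ℝ) (x : EuclideanSpace ℝ ι) : ℝ :=
  (∑ i, |x i| ^ p) ^ (1 / p)

lemma pNorm_pos {x : EuclideanSpace ℝ ι} (hx : x ≠ 0) : 0 < pNorm p x := by
  obtain ⟨i, hi⟩ : ∃ i, x i ≠ 0 := by
    by_contra! h
    exact hx (PiLp.ext h)
  refine rpow_pos_of_pos (Finset.sum_pos' (fun j _ ↦ by positivity) ⟨i, Finset.mem_univ i, ?_⟩) _
  exact rpow_pos_of_pos (abs_pos.2 hi) _

lemma pNorm_smul_of_nonneg (hp : 0 < p) {c : ℝ} (hc : 0 ≤ c) (x : EuclideanSpace ℝ ι) :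
    pNorm p (c • x) = c * pNorm p x := by
  have hterm : ∀ i, |(c • x) i| ^ p = c ^ p * |x i| ^ p := fun i ↦ by
    rw [PiLp.smul_apply, smul_eq_mul, abs_mul, abs_of_nonneg hc, mul_rpow hc (abs_nonneg _)]
  rw [pNorm, pNorm, Finset.sum_congr rfl fun i _ ↦ hterm i, ← Finset.mul_sum,
    mul_rpow (by positivity) (by positivity), ← rpow_mul hc, mul_one_div_cancel hp.ne', rpow_one]

lemma continuous_pNorm (hp : 0 < p) : Continuous (pNorm (ι := ι) p) := by
  refine (continuous_rpow_const (by positivity)).comp (continuous_finsetSum _ fun i _ ↦ ?_)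
  exact (continuous_rpow_const hp.le).comp (proj (𝕜 := ℝ) i).continuous.abs

end EuclideanSpace

open EuclideanSpace

theorem exp_integral_log_le_integral {α : Type*} [MeasurableSpace α] {μ : Measure α}
    [IsProbabilityMeasure μ] {g : α → ℝ} (hg_pos : ∀ᵐ x ∂μ, 0 < g x) (hg : Integrable g μ)
    (hlog : Integrable (fun x ↦ log (g x)) μ) :
    exp (∫ x, log (g x) ∂μ) ≤ ∫ x, g x ∂μ := by
  have hexp_log : (fun x ↦ exp (log (g x))) =ᵐ[μ] g := by
    filter_upwards [hg_pos] with x hx using exp_log hx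
  calc exp (∫ x, log (g x) ∂μ) ≤ ∫ x, exp (log (g x)) ∂μ :=
        convexOn_exp.map_integral_le continuous_exp.continuousOn isClosed_univ
          (.of_forall fun _ ↦ mem_univ _) hlog (hg.congr hexp_log.symm)
    _ = ∫ x, g x ∂μ := integral_congr_ae hexp_log

theorem exp_integral_log_one_div_le {α : Type*} [MeasurableSpace α] {μ : Measure α}
    [IsProbabilityMeasure μ] {f : α → ℝ} (hf_pos : ∀ x, 0 < f x) {n : ℕ} (hn : n ≠ 0)
    (hf_inv_pow : Integrable (fun x ↦ (f x)⁻¹ ^ n) μ)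
    (hf_log : Integrable (fun x ↦ log (1 / f x)) μ) :
    exp (∫ x, log (1 / f x) ∂μ) ≤ (∫ x, (f x)⁻¹ ^ n ∂μ) ^ (1 / n : ℝ) := by
  have hlog_pow : ∀ x, log ((f x)⁻¹ ^ n) = n * log (1 / f x) := fun x ↦ by
    rw [Real.log_pow, one_div]
  have hjensen := exp_integral_log_le_integral (μ := μ)
    (.of_forall fun x ↦ pow_pos (inv_pos.2 (hf_pos x)) n) hf_inv_pow
    (by simpa only [hlog_pow] using hf_log.const_mul (n : ℝ))
  simp only [hlog_pow, integral_const_mul] at hjensen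
  calc exp (∫ x, log (1 / f x) ∂μ) = exp (n * ∫ x, log (1 / f x) ∂μ) ^ (1 / n : ℝ) := by
        rw [← exp_mul, mul_one_div, mul_div_cancel_left₀ _ (Nat.cast_ne_zero.2 hn)]
    _ ≤ (∫ x, (f x)⁻¹ ^ n ∂μ) ^ (1 / n : ℝ) :=
        rpow_le_rpow (exp_pos _).le hjensen (by positivity)

namespace MeasureTheory.Measure

lemma volumeIoiPow_apply_Iic (n : ℕ) (x : Ioi (0 : ℝ)) :
    volumeIoiPow n (Iic x) = ENNReal.ofReal (x.1 ^ (n + 1) / (n + 1)) := by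
  have hx : volumeIoiPow n {x} = 0 := by
    rw [volumeIoiPow, withDensity_apply _ (measurableSet_singleton x),
      Measure.restrict_eq_zero.2 (by simp [comap_subtype_coe_apply measurableSet_Ioi]),
      lintegral_zero_measure]
  rw [← measure_sdiff_null hx, Iic_sdiff_right, volumeIoiPow_apply_Iio]

variable {E : Type*} [NormedAddCommGroup E] [NormedSpace ℝ E] [FiniteDimensional ℝ E]
  [MeasurableSpace E] [BorelSpace E] [Nontrivial E] (μ : Measure E) [μ.IsAddHaarMeasure]
  {N : E → ℝ}

theorem measure_setOf_le_one_eq_lintegral_toSphere (hN : Measurable N)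
    (hN_smul : ∀ c : ℝ, 0 < c → ∀ x, N (c • x) = c * N x) (hN_pos : ∀ x ≠ 0, 0 < N x) :
    μ {x | N x ≤ 1} = ∫⁻ z : sphere (0 : E) 1,
      ENNReal.ofReal ((N z)⁻¹ ^ Module.finrank ℝ E / Module.finrank ℝ E) ∂μ.toSphere := by
  set n := Module.finrank ℝ E
  have hn : 0 < n := Module.finrank_pos
  set A : Set (sphere (0 : E) 1 × Ioi (0 : ℝ)) := {zr | zr.2.1 * N zr.1 ≤ 1}
  have hA : MeasurableSet A :=
    measurableSet_le ((measurable_subtype_coe.comp measurable_snd).mul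
      (hN.comp (measurable_subtype_coe.comp measurable_fst))) measurable_const
  have hpolar : homeomorphUnitSphereProd E ⁻¹' A = Subtype.val ⁻¹' {x | N x ≤ 1} := by
    ext ⟨x, hx⟩
    have hx : 0 < ‖x‖ := norm_pos_iff.2 hx
    simp only [A, mem_preimage, mem_ofPred_eq, homeomorphUnitSphereProd_apply_snd_coe,
      homeomorphUnitSphereProd_apply_fst_coe]
    rw [hN_smul _ (inv_pos.2 hx), ← mul_assoc, mul_inv_cancel₀ hx.ne', one_mul]
  have hslice : ∀ z : sphere (0 : E) 1, Prod.mk z ⁻¹' A =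
      Iic ⟨(N z)⁻¹, inv_pos.2 (hN_pos z (ne_of_mem_sphere z.2 one_ne_zero))⟩ := by
    intro z
    ext r
    simp only [A, mem_preimage, mem_ofPred_eq, mem_Iic, ← Subtype.coe_le_coe]
    rw [← le_div_iff₀ (hN_pos z (ne_of_mem_sphere z.2 one_ne_zero)), one_div]
  calc μ {x | N x ≤ 1} = μ.comap Subtype.val (Subtype.val ⁻¹' {x | N x ≤ 1}) := by
        rw [comap_subtype_coe_apply (measurableSet_singleton (0 : E)).compl,
          Subtype.image_preimage_coe, inter_comm, ← sdiff_eq,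
          measure_sdiff_null (measure_singleton 0)]
    _ = (μ.toSphere.prod (volumeIoiPow (n - 1))) A := by
      rw [← hpolar, ← (measurePreserving_homeomorphUnitSphereProd μ).measure_preimage
        hA.nullMeasurableSet]
    _ = ∫⁻ z, volumeIoiPow (n - 1) (Prod.mk z ⁻¹' A) ∂μ.toSphere := prod_apply hA
    _ = _ := by
      refine lintegral_congr fun z ↦ ?_
      rw [hslice, volumeIoiPow_apply_Iic, Nat.sub_add_cancel hn, Nat.cast_pred hn, sub_add_cancel,
        inv_pow]

theorem measure_setOf_le_one_eq_measure_ball_mul_lintegral (hN : Measurable N)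
    (hN_smul : ∀ c : ℝ, 0 < c → ∀ x, N (c • x) = c * N x) (hN_pos : ∀ x ≠ 0, 0 < N x) :
    μ {x | N x ≤ 1} = μ (ball 0 1) * ∫⁻ z : sphere (0 : E) 1,
      ENNReal.ofReal ((N z)⁻¹ ^ Module.finrank ℝ E) ∂((μ.toSphere univ)⁻¹ • μ.toSphere) := by
  set n := Module.finrank ℝ E
  set σ := (μ.toSphere univ)⁻¹ • μ.toSphere
  have hn : (n : ℝ≥0∞) ≠ 0 := Nat.cast_ne_zero.2 Module.finrank_pos.ne'
  have htoSphere : μ.toSphere = (n * μ (ball 0 1)) • σ := by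
    rw [← toSphere_apply_univ, smul_smul, ENNReal.mul_inv_cancel
      (measure_univ_ne_zero.2 (toSphere_ne_zero μ)) (measure_ne_top _ _), one_smul]
  have hdiv : ∀ z : sphere (0 : E) 1, ENNReal.ofReal ((N z)⁻¹ ^ n / n) =
      (n : ℝ≥0∞)⁻¹ * ENNReal.ofReal ((N z)⁻¹ ^ n) := fun z ↦ by
    rw [div_eq_inv_mul, ENNReal.ofReal_mul (by positivity), ENNReal.ofReal_inv_of_pos
      (Nat.cast_pos.2 Module.finrank_pos), ENNReal.ofReal_natCast]
  rw [measure_setOf_le_one_eq_lintegral_toSphere μ hN hN_smul hN_pos, htoSphere,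
    lintegral_smul_measure, lintegral_congr hdiv,
    lintegral_const_mul' _ _ (ENNReal.inv_ne_top.2 hn), smul_eq_mul, mul_right_comm, ← mul_assoc,
    ENNReal.mul_inv_cancel hn (ENNReal.natCast_ne_top n), one_mul, mul_comm]

theorem measureReal_setOf_le_one_div_measureReal_closedBall (hN : Measurable N)
    (hN_smul : ∀ c : ℝ, 0 < c → ∀ x, N (c • x) = c * N x) (hN_pos : ∀ x ≠ 0, 0 < N x) :
    μ.real {x | N x ≤ 1} / μ.real (closedBall 0 1) = ∫ z : sphere (0 : E) 1,
      (N z)⁻¹ ^ Module.finrank ℝ E ∂((μ.toSphere univ)⁻¹ • μ.toSphere) := by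
  have hball : μ.real (ball 0 1) ≠ 0 :=
    (ENNReal.toReal_pos (measure_ball_pos μ 0 one_pos).ne' measure_ball_lt_top.ne).ne'
  have hnonneg : ∀ z : sphere (0 : E) 1, 0 ≤ (N z)⁻¹ ^ Module.finrank ℝ E := fun z ↦
    pow_nonneg (inv_nonneg.2 (hN_pos z (ne_of_mem_sphere z.2 one_ne_zero)).le) _
  rw [integral_eq_lintegral_of_nonneg_ae (.of_forall hnonneg)
      ((hN.comp measurable_subtype_coe).inv.pow_const _).aestronglyMeasurable,
    measureReal_def, measureReal_def μ (closedBall _ _), addHaar_closedBall_eq_addHaar_ball,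
    measure_setOf_le_one_eq_measure_ball_mul_lintegral μ hN hN_smul hN_pos, ENNReal.toReal_mul,
    ← measureReal_def, mul_div_cancel_left₀ _ hball]

end MeasureTheory.Measure

/-- Jensen/polar-coordinates bound: for 1 ≤ p < ∞ and d ≥ 1,
exp(∫_{S^{d-1}} log(1/‖z‖_p) dS(z)) ≤ (Vol(B_{ℓ_p^d}) / Vol(B_{ℓ_2^d}))^{1/d}. -/
theorem exp_integral_log_le_volume_ratio (p : ℝ) (hp : 1 ≤ p) (d : ℕ) (hd : 1 ≤ d) :
    Real.exp (∫ z : Metric.sphere (0 : EuclideanSpace ℝ (Fin d)) 1,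
        Real.log (1 / (∑ i, |(z : EuclideanSpace ℝ (Fin d)) i| ^ p) ^ (1 / p))
          ∂(unifSphere d))
      ≤ ((volume {x : EuclideanSpace ℝ (Fin d) | (∑ i, |x i| ^ p) ^ (1 / p) ≤ 1}).toReal
          / (volume (Metric.closedBall (0 : EuclideanSpace ℝ (Fin d)) 1)).toReal)
        ^ ((1 : ℝ) / d) := by
  have hp0 : 0 < p := by linarith
  have : Nonempty (Fin d) := ⟨⟨0, hd⟩⟩
  have : NeZero (volume : Measure (EuclideanSpace ℝ (Fin d))).toSphere :=
    ⟨Measure.toSphere_ne_zero _⟩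
  have : IsProbabilityMeasure (unifSphere d) := isProbabilityMeasureSMul
  have hN_pos (z : sphere (0 : EuclideanSpace ℝ (Fin d)) 1) : 0 < pNorm p z.1 :=
    pNorm_pos (ne_of_mem_sphere z.2 one_ne_zero)
  have hN_cont : Continuous fun z : sphere (0 : EuclideanSpace ℝ (Fin d)) 1 ↦ pNorm p z.1 :=
    (continuous_pNorm hp0).comp continuous_subtype_val
  have hratio := Measure.measureReal_setOf_le_one_div_measureReal_closedBall
    (volume : Measure (EuclideanSpace ℝ (Fin d))) (N := pNorm p)
    (continuous_pNorm hp0).measurable (fun c hc x ↦ pNorm_smul_of_nonneg hp0 hc.le x)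
    fun _ hx ↦ pNorm_pos hx
  rw [finrank_euclideanSpace_fin] at hratio
  change exp (∫ z, log (1 / pNorm p z.1) ∂unifSphere d) ≤
    (volume.real {x | pNorm p x ≤ 1} / volume.real (closedBall 0 1)) ^ (1 / (d : ℝ))
  rw [hratio]
  exact exp_integral_log_one_div_le hN_pos (by omega)
    ((hN_cont.inv₀ fun z ↦ (hN_pos z).ne').pow d |>.integrable_of_hasCompactSupport
      (.of_compactSpace _))
    ((continuous_const.div hN_cont fun z ↦ (hN_pos z).ne').log
      (fun z ↦ (one_div_pos.2 (hN_pos z)).ne') |>.integrable_of_hasCompactSupport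
      (.of_compactSpace _))
end
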